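/- For the 3×3 matrix V̂ with rows (2â, √2 b̂, 0), (√2 ĉ, 0, √2 b̂), (0, √2 ĉ, −2â) over a commutative ring, one has V̂³ = (1/2) tr(V̂²) · V̂ and det(V̂) = 0. -/
import Mathlib


theorem stmt_15 {R : Type*} [CommRing R] [Invertible (2 : R)] (a b c s : R)
    (hs : s ^ 2 = 2)
    (V : Matrix (Fin 3) (Fin 3) R)
    (hV : V = Matrix.of ![![2 * a, s * b, 0], ![s * c, 0, s * b], ![0, s * c, -2 * a]]) :
    V * V * V = (⅟(2 : R) * (V * V).trace) • V ∧ V.det = 0 := by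
  have h2 : (⅟(2:R)) * 2 = 1 := invOf_mul_self 2
  subst hV
  constructor
  · ext i j
    fin_cases i <;> fin_cases j <;>
      simp [Matrix.mul_apply, Matrix.trace, Matrix.diag, Fin.sum_univ_succ,
        Matrix.smul_apply] <;>
      ring_nf <;>
      first
      | rfl
      | linear_combination (-4*(a*b*c*s^2 + 2*a^3)) * h2
      | linear_combination (4*(a*b*c*s^2 + 2*a^3)) * h2
      | linear_combination (-2*(2*b*s*a^2 + b^2*s^3*c)) * h2
      | linear_combination (-2*(2*c*s*a^2 + c^2*s^3*b)) * h2
  · simp [Matrix.det_fin_three]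
    ring
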